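/- arXiv:2008.07129 — 2 statements merged into one kernel-verified Lean document; each statement's English description precedes it below -/
import Mathlib

section
/- Let d, α, β be nonzero complex numbers with |β| = 1 satisfying α = κ·d·β⁻¹ + β and α⁻¹ = κ·d·β + β⁻¹, where κ = ±1. Then d = -κ·(β² + β⁻²) and α = -β⁻³. -/
/-!
Multiplying the two equations gives `(κ d β⁻¹ + β)(κ d β + β⁻¹) = α α⁻¹ = 1`. Since `κ² = 1`
this expands to `d (d + κ (β² + β⁻²)) = 0`, and `d ≠ 0` leaves `d = -κ (β² + β⁻²)`.
Substituting back into `α = κ d β⁻¹ + β` gives `α = -β⁻³`.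
-/

section RotationEquations

variable {K : Type*} [Field K] {κ d β : K}

lemma mul_add_eq_zero_of_rotation_product (hκ : κ ^ 2 = 1) (hβ : β ≠ 0)
    (h : (κ * d * β⁻¹ + β) * (κ * d * β + β⁻¹) = 1) :
    d * (d + κ * (β ^ 2 + (β ^ 2)⁻¹)) = 0 := by
  field_simp at h ⊢
  linear_combination h - d ^ 2 * β ^ 2 * hκ

lemma eq_neg_mul_of_rotation_product (hκ : κ ^ 2 = 1) (hβ : β ≠ 0) (hd : d ≠ 0)
    (h : (κ * d * β⁻¹ + β) * (κ * d * β + β⁻¹) = 1) :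
    d = -κ * (β ^ 2 + (β ^ 2)⁻¹) := by
  have hsum := (mul_eq_zero.mp (mul_add_eq_zero_of_rotation_product hκ hβ h)).resolve_left hd
  linear_combination hsum

lemma mul_inv_add_eq_neg_inv_pow_three (hκ : κ ^ 2 = 1) (hβ : β ≠ 0)
    (hd : d = -κ * (β ^ 2 + (β ^ 2)⁻¹)) :
    κ * d * β⁻¹ + β = -(β ^ 3)⁻¹ := by
  subst hd
  field_simp
  linear_combination (-(β ^ 4) - 1) * hκ

end RotationEquations

theorem stmt_0_general (d α β κ : ℂ) (hd : d ≠ 0) (hα : α ≠ 0) (hβ : β ≠ 0)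
    (hκ : κ = 1 ∨ κ = -1)
    (h1 : α = κ * d * β⁻¹ + β) (h2 : α⁻¹ = κ * d * β + β⁻¹) :
    d = -κ * (β ^ 2 + (β ^ 2)⁻¹) ∧ α = -(β ^ 3)⁻¹ := by
  have hκ_sq : κ ^ 2 = 1 := sq_eq_one_iff.mpr hκ
  have hprod : (κ * d * β⁻¹ + β) * (κ * d * β + β⁻¹) = 1 := by
    rw [← h1, ← h2, mul_inv_cancel₀ hα]
  have hd_eq := eq_neg_mul_of_rotation_product hκ_sq hβ hd hprod
  exact ⟨hd_eq, h1.trans (mul_inv_add_eq_neg_inv_pow_three hκ_sq hβ hd_eq)⟩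

theorem stmt_0 (d α β κ : ℂ) (hd : d ≠ 0) (hα : α ≠ 0) (hβ : β ≠ 0)
    (hβabs : ‖β‖ = 1) (hκ : κ = 1 ∨ κ = -1)
    (h1 : α = κ * d * β⁻¹ + β) (h2 : α⁻¹ = κ * d * β + β⁻¹) :
    d = -κ * (β ^ 2 + (β ^ 2)⁻¹) ∧ α = -(β ^ 3)⁻¹ :=
  stmt_0_general d α β κ hd hα hβ hκ h1 h2
end

section
/- Let d_q > 1, d_x, d_y > 0 with d_q² = 1 + d_x + d_y and κ = 1. The 3×3 matrix F of the Dubrovnik case (with the minus signs and denominator (d_q - 1)d_q) has trace 1, hence (being a symmetric involution) eigenvalues {+1, +1, -1}. The matrix of the Kauffman case (plus signs, denominator (d_q + 1)d_q, and subtracting 1 on the diagonal) has trace -1, hence eigenvalues {+1, -1, -1}. -/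
/-!
The rank-one perturbation `a • 1 + u vᵀ` of the scalar matrix has characteristic polynomial
`(X - a)ⁿ⁻¹ (X - a - v ⬝ᵥ u)`. With `v = (1 - d_q, √d_x, √d_y)` one has
`|v|² = 2 d_q (d_q - 1)` because `d_q² = 1 + d_x + d_y`, so the Dubrovnik matrix is the Householder
reflection `1 - 2 v vᵀ / |v|²`. Likewise, with `w = (1 + d_q, √d_x, √d_y)`, `|w|² = 2 d_q (d_q + 1)`
and the Kauffman matrix is `-(1 - 2 w wᵀ / |w|²)`.
-/

open Polynomial Matrix

namespace Matrix

variable {n R : Type*} [Fintype n] [DecidableEq n] [CommRing R]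

theorem trace_vecMulVec_add_scalar (u v : n → R) (a : R) :
    (vecMulVec u v + scalar n a).trace = u ⬝ᵥ v + Fintype.card n * a := by
  simp [trace_add]

theorem charpoly_vecMulVec_add_scalar [Nonempty n] (u v : n → R) (a : R) :
    (vecMulVec u v + scalar n a).charpoly =
      (X - C a) ^ (Fintype.card n - 1) * (X - C (a + u ⬝ᵥ v)) := by
  obtain ⟨k, hk⟩ : ∃ k, Fintype.card n = k + 1 :=
    Nat.exists_eq_succ_of_ne_zero Fintype.card_ne_zero
  rw [← sub_neg_eq_add, ← map_neg, charpoly_sub_scalar, charpoly_vecMulVec, hk,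
    Nat.add_sub_cancel, map_neg, ← sub_eq_add_neg]
  simp only [smul_eq_C_mul, sub_comp, mul_comp, C_comp, pow_comp, X_comp, map_add]
  ring

end Matrix

theorem dotProduct_self_sqrt_sqrt (t : ℝ) {dx dy : ℝ} (hdx : 0 ≤ dx) (hdy : 0 ≤ dy) :
    ![t, √dx, √dy] ⬝ᵥ ![t, √dx, √dy] = t ^ 2 + dx + dy := by
  simp [dotProduct_cons, Real.mul_self_sqrt hdx, Real.mul_self_sqrt hdy, sq, add_assoc]

theorem dubrovnik_eq_vecMulVec_add_scalar {dq dx dy : ℝ} (hdq : dq ≠ 0) (hdq1 : dq - 1 ≠ 0)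
    (hdx : 0 ≤ dx) (hdy : 0 ≤ dy) :
    !![1 / dq, √dx / dq, √dy / dq;
       √dx / dq, -dx / ((dq - 1) * dq) + 1,
         -√(dx * dy) / ((dq - 1) * dq);
       √dy / dq, -√(dx * dy) / ((dq - 1) * dq),
         -dy / ((dq - 1) * dq) + 1] =
      vecMulVec (-((dq - 1) * dq)⁻¹ • ![1 - dq, √dx, √dy]) ![1 - dq, √dx, √dy] +
        scalar (Fin 3) 1 := by
  obtain ⟨a, ha, rfl⟩ : ∃ a, 0 ≤ a ∧ a ^ 2 = dx := ⟨√dx, Real.sqrt_nonneg _, Real.sq_sqrt hdx⟩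
  obtain ⟨b, hb, rfl⟩ : ∃ b, 0 ≤ b ∧ b ^ 2 = dy := ⟨√dy, Real.sqrt_nonneg _, Real.sq_sqrt hdy⟩
  ext i j
  fin_cases i <;> fin_cases j <;>
    simp [Real.sqrt_mul, Real.sqrt_sq, ha, hb] <;> field_simp <;> ring

theorem kauffman_eq_vecMulVec_add_scalar {dq dx dy : ℝ} (hdq : dq ≠ 0) (hdq1 : dq + 1 ≠ 0)
    (hdx : 0 ≤ dx) (hdy : 0 ≤ dy) :
    !![1 / dq, √dx / dq, √dy / dq;
       √dx / dq, dx / ((dq + 1) * dq) - 1,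
         √(dx * dy) / ((dq + 1) * dq);
       √dy / dq, √(dx * dy) / ((dq + 1) * dq),
         dy / ((dq + 1) * dq) - 1] =
      vecMulVec (((dq + 1) * dq)⁻¹ • ![1 + dq, √dx, √dy]) ![1 + dq, √dx, √dy] +
        scalar (Fin 3) (-1) := by
  obtain ⟨a, ha, rfl⟩ : ∃ a, 0 ≤ a ∧ a ^ 2 = dx := ⟨√dx, Real.sqrt_nonneg _, Real.sq_sqrt hdx⟩
  obtain ⟨b, hb, rfl⟩ : ∃ b, 0 ≤ b ∧ b ^ 2 = dy := ⟨√dy, Real.sqrt_nonneg _, Real.sq_sqrt hdy⟩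
  ext i j
  fin_cases i <;> fin_cases j <;>
    simp [Real.sqrt_mul, Real.sqrt_sq, ha, hb] <;> field_simp <;> ring

open Polynomial in
theorem stmt_10 (dq dx dy : ℝ) (hdq : 1 < dq) (hdx : 0 < dx) (hdy : 0 < dy)
    (hsum : dq ^ 2 = 1 + dx + dy) :
    let FD : Matrix (Fin 3) (Fin 3) ℝ :=
      !![1 / dq, Real.sqrt dx / dq, Real.sqrt dy / dq;
         Real.sqrt dx / dq, -dx / ((dq - 1) * dq) + 1,
           -Real.sqrt (dx * dy) / ((dq - 1) * dq);
         Real.sqrt dy / dq, -Real.sqrt (dx * dy) / ((dq - 1) * dq),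
           -dy / ((dq - 1) * dq) + 1]
    let FK : Matrix (Fin 3) (Fin 3) ℝ :=
      !![1 / dq, Real.sqrt dx / dq, Real.sqrt dy / dq;
         Real.sqrt dx / dq, dx / ((dq + 1) * dq) - 1,
           Real.sqrt (dx * dy) / ((dq + 1) * dq);
         Real.sqrt dy / dq, Real.sqrt (dx * dy) / ((dq + 1) * dq),
           dy / ((dq + 1) * dq) - 1]
    FD.trace = 1 ∧ FD.charpoly = (X - C 1) ^ 2 * (X + C 1) ∧
      FK.trace = -1 ∧ FK.charpoly = (X - C 1) * (X + C 1) ^ 2 := by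
  intro FD FK
  have hdq0 : dq ≠ 0 := by positivity
  have hdq1 : dq - 1 ≠ 0 := (sub_pos.2 hdq).ne'
  have hdq2 : dq + 1 ≠ 0 := by positivity
  have hD : -((dq - 1) * dq)⁻¹ * ((1 - dq) ^ 2 + dx + dy) = -2 := by
    field_simp
    linear_combination hsum
  have hK : ((dq + 1) * dq)⁻¹ * ((1 + dq) ^ 2 + dx + dy) = 2 := by
    field_simp
    linear_combination -hsum
  rw [show FD = _ from dubrovnik_eq_vecMulVec_add_scalar hdq0 hdq1 hdx.le hdy.le,
    show FK = _ from kauffman_eq_vecMulVec_add_scalar hdq0 hdq2 hdx.le hdy.le,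
    trace_vecMulVec_add_scalar, trace_vecMulVec_add_scalar, charpoly_vecMulVec_add_scalar,
    charpoly_vecMulVec_add_scalar, smul_dotProduct, smul_dotProduct,
    dotProduct_self_sqrt_sqrt _ hdx.le hdy.le, dotProduct_self_sqrt_sqrt _ hdx.le hdy.le,
    smul_eq_mul, smul_eq_mul, hD, hK, Fintype.card_fin]
  norm_num
  ring
end
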